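/- arXiv:2003.07040 — 3 statements merged into one kernel-verified Lean document; each statement's English description precedes it below -/
import Mathlib

section
/- Let k, and finite index sets Q_{ab} (for 1 ≤ a ≠ b ≤ d) be given, and let A_i ~ Bernoulli(α), B_i ~ Bernoulli(β), P_{ij} ~ Bernoulli(p), P_{a,ij} ~ Bernoulli(p_a) be mutually independent. Then Pr( Σ_{1≤a≠b≤d} Σ_{(i,j)∈Q_{ab}} P_{ij}·( P_{a,ij}·log(p_b/p_a) + (1−P_{a,ij})·log((1−p_b)/(1−p_a)) ) + log( α(1−β)/((1−α)β) ) · Σ_{i=1}^{2(n/2−k)k} (B_i − A_i) ≥ 0 ) ≤ (1 − p·(d_H^min)²)^{D_X} · (1 − d_H(α,β)²)^{4(n/2−k)k}, where D_X = Σ_{1≤a≠b≤d} |Q_{ab}|. -/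
open Filter Finset Asymptotics
open scoped Classical

noncomputable section

namespace Paper

/-- Squared Hellinger distance between `Bernoulli x` and `Bernoulli y`. -/
def hellSq (x y : ℝ) : ℝ :=
  ((Real.sqrt x - Real.sqrt y) ^ 2 + (Real.sqrt (1 - x) - Real.sqrt (1 - y)) ^ 2) / 2

/-- Squared minimum Hellinger distance among the latent preference levels. -/
def dHminSq {d : ℕ} (lvl : Fin d → ℝ) : ℝ :=
  sInf {h : ℝ | ∃ i j : Fin d, i ≠ j ∧ h = hellSq (lvl i) (lvl j)}

/-- Graph information quantity `I_s = -2 log(1 - d_H(α,β)^2)`. -/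
def Is (α β : ℝ) : ℝ := -2 * Real.log (1 - hellSq α β)

/-- Observed rating matrices: `none` = unobserved (0), `some true` = +1, `some false` = −1. -/
abbrev RatingMatrix (N M : ℕ) := Fin N → Fin M → Option Bool

/-- Observed graphs on `N` users: an edge indicator on each unordered pair `(i, j)`, `i < j`. -/
abbrev ObsGraph (N : ℕ) := {e : Fin N × Fin N // e.1 < e.2} → Bool

/-- Likelihood of one rating entry. -/
def entryProb (p r : ℝ) : Option Bool → ℝ
  | none => 1 - p
  | some true => p * r
  | some false => p * (1 - r)

/-- Likelihood of an observed rating matrix given the latent preference matrix `R`. -/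
def ratingLik {N M : ℕ} (p : ℝ) (R : Fin N → Fin M → ℝ) (Nm : RatingMatrix N M) : ℝ :=
  ∏ i, ∏ j, entryProb p (R i j) (Nm i j)

/-- Likelihood of an observed graph under the symmetric SBM with cluster assignment `σ`. -/
def graphLik {N : ℕ} {κ : Type} [DecidableEq κ] (α β : ℝ) (σ : Fin N → κ)
    (g : ObsGraph N) : ℝ :=
  ∏ e : {e : Fin N × Fin N // e.1 < e.2},
    if σ e.1.1 = σ e.1.2 then (if g e then α else 1 - α) else (if g e then β else 1 - β)

/-- Joint likelihood of `(N^Ω, G)`. -/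
def outcomeProb {N M : ℕ} {κ : Type} [DecidableEq κ] (p α β : ℝ)
    (R : Fin N → Fin M → ℝ) (σ : Fin N → κ) (Nm : RatingMatrix N M) (g : ObsGraph N) : ℝ :=
  ratingLik p R Nm * graphLik α β σ g

/-- Probability of an event of `(N^Ω, G)` under the model `(R, σ, p, α, β)`. -/
def prEvent {N M : ℕ} {κ : Type} [DecidableEq κ] (p α β : ℝ)
    (R : Fin N → Fin M → ℝ) (σ : Fin N → κ)
    (S : RatingMatrix N M → ObsGraph N → Prop) : ℝ :=
  ∑ Nm : RatingMatrix N M, ∑ g : ObsGraph N, if S Nm g then outcomeProb p α β R σ Nm g else 0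

/-- Probability of an event of the graph `G` alone. -/
def grPrEvent {N : ℕ} {κ : Type} [DecidableEq κ] (α β : ℝ) (σ : Fin N → κ)
    (S : ObsGraph N → Prop) : ℝ :=
  ∑ g : ObsGraph N, if S g then graphLik α β σ g else 0

/-- Probability of an event of the rating matrix `N^Ω` alone. -/
def prRating {N M : ℕ} (p : ℝ) (R : Fin N → Fin M → ℝ)
    (S : RatingMatrix N M → Prop) : ℝ :=
  ∑ Nm : RatingMatrix N M, if S Nm then ratingLik p R Nm else 0

/-- Probability of a joint event of the rating matrix `N^Ω` and `m₀` column indices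
sampled uniformly at random from `[M]` with replacement, independently of `N^Ω`. -/
def prRatingSample {N M m₀ : ℕ} (p : ℝ) (R : Fin N → Fin M → ℝ)
    (S : RatingMatrix N M → (Fin m₀ → Fin M) → Prop) : ℝ :=
  ∑ Nm : RatingMatrix N M, ∑ s : Fin m₀ → Fin M,
    if S Nm s then ratingLik p R Nm * (1 / (M : ℝ)) ^ m₀ else 0

/-- Hamming distance between two vectors. -/
def hamming {M : ℕ} {X : Type*} (u v : Fin M → X) : ℕ :=
  (Finset.univ.filter fun j => u j ≠ v j).card

/-- Bernoulli weight. -/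
def bern (q : ℝ) (b : Bool) : ℝ := if b then q else 1 - q

/-- Real-valued indicator of a Boolean. -/
def bInd (b : Bool) : ℝ := if b then 1 else 0

/-- Adjacency of `i` and `i'` in an observed graph. -/
def adjB {N : ℕ} (g : ObsGraph N) (i i' : Fin N) : Bool :=
  if h : i < i' then g ⟨(i, i'), h⟩ else if h' : i' < i then g ⟨(i', i), h'⟩ else false

/-- `e({i}, A)`: number of edges between user `i` and the user set `A`. -/
def eCount {N : ℕ} (g : ObsGraph N) (i : Fin N) (A : Finset (Fin N)) : ℕ :=
  (A.filter fun i' => adjB g i i' = true).card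

/-- The local likelihood-difference statistic `L(i; A, B)`,
where `A = {i | c i = true}` and `B = {i | c i = false}`. -/
def Lstat {N M : ℕ} (α β : ℝ) (uvec vvec : Fin M → ℝ)
    (Nm : RatingMatrix N M) (g : ObsGraph N) (c : Fin N → Bool) (i : Fin N) : ℝ :=
  Real.log (α * (1 - β) / ((1 - α) * β)) *
      ((eCount g i (Finset.univ.filter fun i' => c i' = false) : ℝ)
        - (eCount g i (Finset.univ.filter fun i' => c i' = true) : ℝ))
    + ∑ j, (if Nm i j = some true then Real.log (vvec j / uvec j) else 0)
    + ∑ j, (if Nm i j = some false then Real.log ((1 - vvec j) / (1 - uvec j)) else 0)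

/-- Size of the `k`-th cluster. -/
def clusterSize {n K : ℕ} (C : Fin n → Fin K) (k : Fin K) : ℕ :=
  (Finset.univ.filter fun i => C i = k).card

/-- Worst-case error probability `P_e^γ(ψ)` for the two equal-sized cluster model
with `2 * n'` users. -/
def worstErr (n' M : ℕ) (p α β : ℝ) {d : ℕ} (lvl : Fin d → ℝ) (γ : ℝ)
    (ψ : RatingMatrix (2 * n') M → ObsGraph (2 * n') → Fin (2 * n') → Fin M → ℝ) : ℝ :=
  sSup {e : ℝ | ∃ (σ : Fin (2 * n') → Bool) (u v : Fin M → Fin d),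
    (Finset.univ.filter fun i => σ i = true).card = n' ∧
    hamming (fun j => lvl (u j)) (fun j => lvl (v j)) = ⌈γ * (M : ℝ)⌉₊ ∧
    e = prEvent p α β (fun i j => lvl (if σ i then u j else v j)) σ
      (fun Nm g => ψ Nm g ≠ fun i j => lvl (if σ i then u j else v j))}

end Paper

open Paper

/-! Chernoff bound at exponent `1/2`: the probability that the log-likelihood-ratio statistic is
nonnegative is at most the expectation of the square root of the likelihood ratio. All the
Bernoulli variables are independent, so this expectation factorises over the sites: a rating site
in `Q a b` contributes the Bhattacharyya-type factor `1 - p · d_H(p_a, p_b)² ≤ 1 - p · (d_H^min)²`,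
and each pair `(A_i, B_i)` contributes `(1 - d_H(α, β)²)²`. -/

section

variable {Ω κ X : Type*} [Fintype Ω] [Fintype κ] [Fintype X]

lemma sum_ite_nonneg_le_sum_exp_mul (Z w : Ω → ℝ) (hw : ∀ ω, 0 ≤ w ω) {s : ℝ} (hs : 0 ≤ s) :
    ∑ ω, (if 0 ≤ Z ω then w ω else 0) ≤ ∑ ω, Real.exp (s * Z ω) * w ω := by
  refine Finset.sum_le_sum fun ω _ => ?_
  split_ifs with hZ
  · exact le_mul_of_one_le_left (hw ω) (Real.one_le_exp (mul_nonneg hs hZ))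
  · exact mul_nonneg (Real.exp_nonneg _) (hw ω)

lemma sum_exp_mul_add_mul_mul {Ω' : Type*} [Fintype Ω'] (s : ℝ) (Z w : Ω → ℝ) (Z' w' : Ω' → ℝ) :
    ∑ ω : Ω × Ω', Real.exp (s * (Z ω.1 + Z' ω.2)) * (w ω.1 * w' ω.2)
      = (∑ ω, Real.exp (s * Z ω) * w ω) * ∑ ω', Real.exp (s * Z' ω') * w' ω' := by
  rw [Fintype.sum_prod_type, Finset.sum_mul_sum]
  simp only [mul_add, Real.exp_add]
  exact Finset.sum_congr rfl fun _ _ => Finset.sum_congr rfl fun _ _ => by ring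

lemma sum_exp_sum_mul_prod [DecidableEq κ] (φ w : κ → X → ℝ) :
    ∑ f : κ → X, Real.exp (∑ i, φ i (f i)) * ∏ i, w i (f i)
      = ∏ i, ∑ v, Real.exp (φ i v) * w i v := by
  rw [Fintype.prod_sum]
  simp only [Real.exp_sum, Finset.prod_mul_distrib]

lemma sum_exp_sum_mul_prod₃ {α β γ : Type*} [Fintype α] [Fintype β] [Fintype γ] [DecidableEq α]
    [DecidableEq β] [DecidableEq γ] (φ w : α → β → γ → X → ℝ) :
    ∑ f : α → β → γ → X, Real.exp (∑ a, ∑ b, ∑ c, φ a b c (f a b c))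
        * ∏ a, ∏ b, ∏ c, w a b c (f a b c)
      = ∏ a, ∏ b, ∏ c, ∑ v, Real.exp (φ a b c v) * w a b c v := by
  simp only [Fintype.prod_sum, Real.exp_sum, Finset.prod_mul_distrib]

lemma prod_prod_prod_ite_eq_pow {ι M : Type*} [Fintype ι] [CommMonoid M] [DecidableEq κ]
    (Q : κ → κ → Finset ι) (c : M) :
    ∏ a, ∏ b, ∏ x, (if a ≠ b ∧ x ∈ Q a b then c else 1)
      = c ^ (∑ a, ∑ b, if a ≠ b then (Q a b).card else 0) := by
  simp only [← Finset.prod_pow_eq_pow_sum]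
  refine Finset.prod_congr rfl fun a _ => Finset.prod_congr rfl fun b _ => ?_
  by_cases hab : a = b <;> simp [hab]

end

namespace Paper

lemma one_sub_hellSq {x y : ℝ} (hx0 : 0 ≤ x) (hx1 : x ≤ 1) (hy0 : 0 ≤ y) (hy1 : y ≤ 1) :
    1 - hellSq x y = √x * √y + √(1 - x) * √(1 - y) := by
  have hx := Real.sq_sqrt hx0
  have hy := Real.sq_sqrt hy0
  have hx' := Real.sq_sqrt (sub_nonneg.2 hx1)
  have hy' := Real.sq_sqrt (sub_nonneg.2 hy1)
  unfold hellSq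
  linear_combination (-1 / 2 : ℝ) * (hx + hy + hx' + hy')

lemma hellSq_nonneg (x y : ℝ) : 0 ≤ hellSq x y := by
  unfold hellSq; positivity

lemma hellSq_le_one {x y : ℝ} (hx0 : 0 ≤ x) (hx1 : x ≤ 1) (hy0 : 0 ≤ y) (hy1 : y ≤ 1) :
    hellSq x y ≤ 1 := by
  have hBC : 0 ≤ √x * √y + √(1 - x) * √(1 - y) := by positivity
  linarith [one_sub_hellSq hx0 hx1 hy0 hy1]

lemma dHminSq_le_hellSq {d : ℕ} (lvl : Fin d → ℝ) {a b : Fin d} (hab : a ≠ b) :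
    dHminSq lvl ≤ hellSq (lvl a) (lvl b) :=
  csInf_le ⟨0, by rintro _ ⟨i, j, -, rfl⟩; exact hellSq_nonneg _ _⟩ ⟨a, b, hab, rfl⟩

lemma bern_nonneg {q : ℝ} (h0 : 0 ≤ q) (h1 : q ≤ 1) (b : Bool) : 0 ≤ bern q b := by
  cases b <;> simp [bern] <;> linarith

lemma sum_bern_mul_bern (q r : ℝ) : ∑ v : Bool × Bool, bern q v.1 * bern r v.2 = 1 := by
  simp only [Fintype.sum_prod_type, Fintype.sum_bool, bern]
  norm_num
  ring

lemma exp_half_log_div_mul {x y : ℝ} (hx : 0 < x) (hy : 0 < y) :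
    Real.exp (2⁻¹ * Real.log (y / x)) * x = √x * √y := by
  have hsx := Real.sqrt_pos.2 hx
  have hexp : Real.exp (2⁻¹ * Real.log (y / x)) = √(y / x) := by
    rw [Real.sqrt_eq_rpow, Real.rpow_def_of_pos (by positivity)]
    ring_nf
  rw [hexp, Real.sqrt_div' _ hx.le]
  field_simp
  rw [Real.sq_sqrt hx.le]

-- `v = (P, B)`: whether the entry is observed, and its rating; the log-likelihood ratio of level
-- `y` against level `x`.
def ratingLLR (x y : ℝ) (v : Bool × Bool) : ℝ :=
  bInd v.1 * (bInd v.2 * Real.log (y / x) + (1 - bInd v.2) * Real.log ((1 - y) / (1 - x)))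

-- `v = (A, B)` with `A ~ Bernoulli α`, `B ~ Bernoulli β`.
def graphLLR (α β : ℝ) (v : Bool × Bool) : ℝ :=
  Real.log (α * (1 - β) / ((1 - α) * β)) * (bInd v.2 - bInd v.1)

lemma sum_exp_half_ratingLLR (p : ℝ) {x y : ℝ} (hx0 : 0 < x) (hx1 : x < 1) (hy0 : 0 < y)
    (hy1 : y < 1) :
    ∑ v : Bool × Bool, Real.exp (2⁻¹ * ratingLLR x y v) * (bern p v.1 * bern x v.2)
      = 1 - p * hellSq x y := by
  have h1 := exp_half_log_div_mul hx0 hy0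
  have h2 := exp_half_log_div_mul (sub_pos.2 hx1) (sub_pos.2 hy1)
  have hH := one_sub_hellSq hx0.le hx1.le hy0.le hy1.le
  simp only [Fintype.sum_prod_type, Fintype.sum_bool, ratingLLR, bern, bInd, ↓reduceIte,
    Bool.false_eq_true, zero_mul, one_mul, sub_zero, sub_self, mul_zero, add_zero, zero_add,
    Real.exp_zero]
  linear_combination p * h1 + p * h2 - p * hH

lemma sum_exp_half_graphLLR {α β : ℝ} (hα0 : 0 < α) (hα1 : α < 1) (hβ0 : 0 < β) (hβ1 : β < 1) :
    ∑ v : Bool × Bool, Real.exp (2⁻¹ * graphLLR α β v) * (bern α v.1 * bern β v.2)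
      = (1 - hellSq α β) ^ 2 := by
  have hα1' := sub_pos.2 hα1
  have hβ1' := sub_pos.2 hβ1
  have h1 := exp_half_log_div_mul (mul_pos hα1' hβ0) (mul_pos hα0 hβ1')
  have h2 := exp_half_log_div_mul (mul_pos hα0 hβ1') (mul_pos hα1' hβ0)
  rw [← inv_div, Real.log_inv, mul_neg] at h2
  rw [one_sub_hellSq hα0.le hα1.le hβ0.le hβ1.le]
  simp only [Real.sqrt_mul hα0.le, Real.sqrt_mul hα1'.le] at h1 h2
  simp only [Fintype.sum_prod_type, Fintype.sum_bool, graphLLR, bern, bInd, ↓reduceIte,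
    Bool.false_eq_true, sub_self, mul_zero, Real.exp_zero, one_mul, sub_zero, zero_sub, mul_one,
    mul_neg, neg_zero]
  have qα := Real.sq_sqrt hα0.le
  have qβ := Real.sq_sqrt hβ0.le
  have qα' := Real.sq_sqrt hα1'.le
  have qβ' := Real.sq_sqrt hβ1'.le
  linear_combination h1 + h2 - √β ^ 2 * qα - α * qβ - √(1 - β) ^ 2 * qα' - (1 - α) * qβ'

def ratingScore {κ ι : Type*} [Fintype κ] [DecidableEq κ] (Q : κ → κ → Finset ι) (r : κ → ℝ)
    (f : κ → κ → ι → Bool × Bool) : ℝ :=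
  ∑ a, ∑ b, if a ≠ b then ∑ x ∈ Q a b, ratingLLR (r a) (r b) (f a b x) else 0

def ratingWeight {κ ι : Type*} [Fintype κ] [Fintype ι] (p : ℝ) (r : κ → ℝ)
    (f : κ → κ → ι → Bool × Bool) : ℝ :=
  ∏ a, ∏ b, ∏ x, bern p (f a b x).1 * bern (r a) (f a b x).2

def graphScore {κ : Type*} [Fintype κ] (α β : ℝ) (h : κ → Bool × Bool) : ℝ :=
  Real.log (α * (1 - β) / ((1 - α) * β)) * ∑ l, (bInd (h l).2 - bInd (h l).1)

def graphWeight {κ : Type*} [Fintype κ] (α β : ℝ) (h : κ → Bool × Bool) : ℝ :=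
  ∏ l, bern α (h l).1 * bern β (h l).2

section

variable {κ ι : Type*} [Fintype κ] [Fintype ι]

lemma ratingWeight_nonneg {p : ℝ} (hp0 : 0 ≤ p) (hp1 : p ≤ 1) {r : κ → ℝ} (hr0 : ∀ a, 0 ≤ r a)
    (hr1 : ∀ a, r a ≤ 1) (f : κ → κ → ι → Bool × Bool) : 0 ≤ ratingWeight p r f :=
  Finset.prod_nonneg fun a _ => Finset.prod_nonneg fun _ _ => Finset.prod_nonneg fun _ _ =>
    mul_nonneg (bern_nonneg hp0 hp1 _) (bern_nonneg (hr0 a) (hr1 a) _)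

lemma graphWeight_nonneg {α β : ℝ} (hα0 : 0 ≤ α) (hα1 : α ≤ 1) (hβ0 : 0 ≤ β) (hβ1 : β ≤ 1)
    (h : κ → Bool × Bool) : 0 ≤ graphWeight α β h :=
  Finset.prod_nonneg fun _ _ => mul_nonneg (bern_nonneg hα0 hα1 _) (bern_nonneg hβ0 hβ1 _)

lemma sum_exp_half_graphScore_mul [DecidableEq κ] {α β : ℝ} (hα0 : 0 < α) (hα1 : α < 1)
    (hβ0 : 0 < β) (hβ1 : β < 1) :
    ∑ h : κ → Bool × Bool, Real.exp (2⁻¹ * graphScore α β h) * graphWeight α β h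
      = ((1 - hellSq α β) ^ 2) ^ Fintype.card κ := by
  have hscore : ∀ h : κ → Bool × Bool, 2⁻¹ * graphScore α β h = ∑ l, 2⁻¹ * graphLLR α β (h l) :=
    fun h => by simp only [graphScore, graphLLR, Finset.mul_sum]
  simp only [hscore, graphWeight]
  rw [sum_exp_sum_mul_prod (fun _ v => 2⁻¹ * graphLLR α β v) (fun _ v => bern α v.1 * bern β v.2),
    Finset.prod_const, sum_exp_half_graphLLR hα0 hα1 hβ0 hβ1, Finset.card_univ]

lemma sum_exp_half_ratingScore_mul_le [DecidableEq κ] {p h : ℝ} (hp0 : 0 ≤ p) (hp1 : p ≤ 1)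
    {r : κ → ℝ} (hr0 : ∀ a, 0 < r a) (hr1 : ∀ a, r a < 1) (Q : κ → κ → Finset ι)
    (hh : ∀ a b, a ≠ b → h ≤ hellSq (r a) (r b)) :
    ∑ f : κ → κ → ι → Bool × Bool, Real.exp (2⁻¹ * ratingScore Q r f) * ratingWeight p r f
      ≤ (1 - p * h) ^ (∑ a, ∑ b, if a ≠ b then (Q a b).card else 0) := by
  set T : κ → κ → ι → Bool × Bool → ℝ := fun a b x v =>
    if a ≠ b ∧ x ∈ Q a b then 2⁻¹ * ratingLLR (r a) (r b) v else 0
  have hscore : ∀ f, 2⁻¹ * ratingScore Q r f = ∑ a, ∑ b, ∑ x, T a b x (f a b x) := by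
    intro f
    simp only [ratingScore, T, Finset.mul_sum]
    refine Finset.sum_congr rfl fun a _ => Finset.sum_congr rfl fun b _ => ?_
    by_cases hab : a = b <;> simp [hab, Finset.mul_sum, Finset.sum_ite_mem]
  have hsite : ∀ a b x, ∑ v, Real.exp (T a b x v) * (bern p v.1 * bern (r a) v.2)
      = if a ≠ b ∧ x ∈ Q a b then 1 - p * hellSq (r a) (r b) else 1 := by
    intro a b x
    split_ifs with hQ
    · simp only [T, if_pos hQ]
      exact sum_exp_half_ratingLLR p (hr0 a) (hr1 a) (hr0 b) (hr1 b)
    · simp only [T, if_neg hQ, Real.exp_zero, one_mul]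
      exact sum_bern_mul_bern p (r a)
  calc _ = ∏ a, ∏ b, ∏ x, if a ≠ b ∧ x ∈ Q a b then 1 - p * hellSq (r a) (r b) else 1 := by
        simp only [hscore, ratingWeight]
        rw [sum_exp_sum_mul_prod₃ T fun a _ _ v => bern p v.1 * bern (r a) v.2]
        simp only [hsite]
    _ ≤ ∏ a, ∏ b, ∏ x, if a ≠ b ∧ x ∈ Q a b then 1 - p * h else 1 := by
        have hsite0 : ∀ a b x,
            0 ≤ if a ≠ b ∧ x ∈ Q a b then 1 - p * hellSq (r a) (r b) else 1 := by
          intro a b x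
          split_ifs
          · exact sub_nonneg.2 (mul_le_one₀ hp1 (hellSq_nonneg _ _)
              (hellSq_le_one (hr0 a).le (hr1 a).le (hr0 b).le (hr1 b).le))
          · exact zero_le_one
        refine prod_le_prod
          (fun a _ => prod_nonneg fun b _ => prod_nonneg fun x _ => hsite0 a b x)
          fun a _ => prod_le_prod (fun b _ => prod_nonneg fun x _ => hsite0 a b x)
            fun b _ => prod_le_prod (fun x _ => hsite0 a b x) fun x _ => ?_
        split_ifs with hab
        · exact sub_le_sub_left (mul_le_mul_of_nonneg_left (hh a b hab.1) hp0) 1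
        · rfl
    _ = _ := prod_prod_prod_ite_eq_pow Q _

end

end Paper

theorem statement7_general
    (n' d : ℕ) (lvl : Fin d → ℝ)
    (hlvl0 : ∀ t, 0 < lvl t) (hlvl1 : ∀ t, lvl t < 1)
    (p α β : ℝ) (hp0 : 0 < p) (hp1 : p < 1)
    (hβ0 : 0 < β) (hβα : β ≤ α) (hα1 : α < 1)
    (k : ℕ)
    (ι : Type) [Fintype ι] (Q : Fin d → Fin d → Finset ι) :
    (∑ ω : (Fin d → Fin d → ι → Bool × Bool) × (Fin (2 * (n' - k) * k) → Bool × Bool),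
      if 0 ≤
          (∑ a : Fin d, ∑ b : Fin d, if a ≠ b then
            (∑ x ∈ Q a b,
              bInd (ω.1 a b x).1 *
                (bInd (ω.1 a b x).2 * Real.log (lvl b / lvl a)
                  + (1 - bInd (ω.1 a b x).2) * Real.log ((1 - lvl b) / (1 - lvl a))))
            else 0)
          + Real.log (α * (1 - β) / ((1 - α) * β)) *
              (∑ l : Fin (2 * (n' - k) * k), (bInd (ω.2 l).2 - bInd (ω.2 l).1))
      then
        (∏ a : Fin d, ∏ b : Fin d, ∏ x : ι,
            bern p (ω.1 a b x).1 * bern (lvl a) (ω.1 a b x).2)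
          * (∏ l : Fin (2 * (n' - k) * k), bern α (ω.2 l).1 * bern β (ω.2 l).2)
      else 0)
    ≤ (1 - p * dHminSq lvl) ^ (∑ a : Fin d, ∑ b : Fin d, if a ≠ b then (Q a b).card else 0)
      * (1 - hellSq α β) ^ (4 * (n' - k) * k) := by
  have hα0 : 0 < α := hβ0.trans_le hβα
  have hβ1 : β < 1 := hβα.trans_lt hα1
  calc _ ≤ ∑ ω : (Fin d → Fin d → ι → Bool × Bool) × (Fin (2 * (n' - k) * k) → Bool × Bool),
          Real.exp (2⁻¹ * (ratingScore Q lvl ω.1 + graphScore α β ω.2))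
            * (ratingWeight p lvl ω.1 * graphWeight α β ω.2) :=
        sum_ite_nonneg_le_sum_exp_mul _ _ (fun ω => mul_nonneg
          (ratingWeight_nonneg hp0.le hp1.le (fun a => (hlvl0 a).le) (fun a => (hlvl1 a).le) _)
          (graphWeight_nonneg hα0.le hα1.le hβ0.le hβ1.le _)) (by norm_num)
    _ = (∑ f, Real.exp (2⁻¹ * ratingScore Q lvl f) * ratingWeight p lvl f)
          * ((1 - hellSq α β) ^ 2) ^ (2 * (n' - k) * k) := by
        rw [sum_exp_mul_add_mul_mul, sum_exp_half_graphScore_mul hα0 hα1 hβ0 hβ1, Fintype.card_fin]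
    _ ≤ (1 - p * dHminSq lvl) ^ (∑ a : Fin d, ∑ b : Fin d, if a ≠ b then (Q a b).card else 0)
          * ((1 - hellSq α β) ^ 2) ^ (2 * (n' - k) * k) :=
        mul_le_mul_of_nonneg_right (sum_exp_half_ratingScore_mul_le hp0.le hp1.le hlvl0 hlvl1 Q
          fun _ _ hab => dHminSq_le_hellSq lvl hab) (by positivity)
    _ = _ := by rw [← pow_mul]; ring_nf

/-- Lemma 3, Chernoff bound: for given `k` and finite index sets `Q a b`
(for `a ≠ b`), with all the displayed Bernoulli variables mutually independent,
`Pr(Z ≥ 0) ≤ (1 − p·(d_H^min)²)^{D_X} · (1 − d_H(α,β)²)^{4(n/2−k)k}` where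
`D_X = Σ_{a≠b} |Q a b|` (here `n = 2n'`, and `k ≤ n/4` reads `2k ≤ n'`). -/
theorem statement7
    (n' d : ℕ) (hd : 1 ≤ d) (lvl : Fin d → ℝ)
    (hmono : StrictMono lvl) (hlvl0 : ∀ t, 0 < lvl t) (hlvl1 : ∀ t, lvl t < 1)
    (p α β : ℝ) (hp0 : 0 < p) (hp1 : p < 1)
    (hβ0 : 0 < β) (hβα : β ≤ α) (hα1 : α < 1)
    (k : ℕ) (hk : 2 * k ≤ n')
    (ι : Type) [Fintype ι] (Q : Fin d → Fin d → Finset ι) :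
    (∑ ω : (Fin d → Fin d → ι → Bool × Bool) × (Fin (2 * (n' - k) * k) → Bool × Bool),
      if 0 ≤
          (∑ a : Fin d, ∑ b : Fin d, if a ≠ b then
            (∑ x ∈ Q a b,
              bInd (ω.1 a b x).1 *
                (bInd (ω.1 a b x).2 * Real.log (lvl b / lvl a)
                  + (1 - bInd (ω.1 a b x).2) * Real.log ((1 - lvl b) / (1 - lvl a))))
            else 0)
          + Real.log (α * (1 - β) / ((1 - α) * β)) *
              (∑ l : Fin (2 * (n' - k) * k), (bInd (ω.2 l).2 - bInd (ω.2 l).1))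
      then
        (∏ a : Fin d, ∏ b : Fin d, ∏ x : ι,
            bern p (ω.1 a b x).1 * bern (lvl a) (ω.1 a b x).2)
          * (∏ l : Fin (2 * (n' - k) * k), bern α (ω.2 l).1 * bern β (ω.2 l).2)
      else 0)
    ≤ (1 - p * dHminSq lvl) ^ (∑ a : Fin d, ∑ b : Fin d, if a ≠ b then (Q a b).card else 0)
      * (1 - hellSq α β) ^ (4 * (n' - k) * k) :=
  statement7_general n' d lvl hlvl0 hlvl1 p α β hp0 hp1 hβ0 hβα hα1 k ι Q
end
end

section
/- Fix a realization of (N^Ω, G), a ground-truth two-cluster latent preference matrix R with clusters A_R, B_R, and subsets A_P ⊆ A_R, A_Q ⊆ B_R such that G has no edge with both endpoints in A_P ∪ A_Q. For a user i, let R^{(i)} be the matrix obtained from R by replacing row i with v_R if i ∈ A_R and with u_R otherwise (so its clusters are A_R △ {i} and B_R △ {i}). Then for any i ∈ A_P and j ∈ A_Q: if L(R^{(i)}) ≤ L(R) and L(R^{(j)}) ≤ L(R), then L((R^{(i)})^{(j)}) ≤ L(R). -/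
open Filter Finset Asymptotics
open scoped Classical

noncomputable section

open Paper

/-- Lemma 7: fix data `(N^Ω, G)`, ground truth `R` with clusters given
by `σ`, and sets `A_P ⊆ A_R`, `A_Q ⊆ B_R` spanning no edge of `G`. For a user `i`, the flip
`R^{(i)}` corresponds to the cluster assignment `Function.update σ i (!σ i)` (row `i` is
replaced by the opposite latent vector). If `i ∈ A_P`, `j ∈ A_Q`, `L(R^{(i)}) ≤ L(R)` and
`L(R^{(j)}) ≤ L(R)`, then `L((R^{(i)})^{(j)}) ≤ L(R)`. -/
theorem statement12
    (n' M d : ℕ) (lvl : Fin d → ℝ)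
    (hmono : StrictMono lvl) (hlvl0 : ∀ t, 0 < lvl t) (hlvl1 : ∀ t, lvl t < 1)
    (p α β : ℝ) (hp0 : 0 < p) (hp1 : p < 1)
    (hβ0 : 0 < β) (hβα : β ≤ α) (hα1 : α < 1)
    (Nm : RatingMatrix (2 * n') M) (g : ObsGraph (2 * n'))
    (σ : Fin (2 * n') → Bool)
    (hbal : (Finset.univ.filter fun i => σ i = true).card = n')
    (u v : Fin M → Fin d)
    (L : (Fin (2 * n') → Bool) → ℝ)
    (hL : L = fun σ' => -Real.log (outcomeProb p α β
      (fun i j => lvl (if σ' i then u j else v j)) σ' Nm g))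
    (P Q : Finset (Fin (2 * n')))
    (hP : ∀ i ∈ P, σ i = true) (hQ : ∀ i ∈ Q, σ i = false)
    (hnoedge : ∀ e : {e : Fin (2 * n') × Fin (2 * n') // e.1 < e.2},
      g e = true → ¬(e.1.1 ∈ P ∪ Q ∧ e.1.2 ∈ P ∪ Q))
    (i j : Fin (2 * n')) (hi : i ∈ P) (hj : j ∈ Q)
    (hLi : L (Function.update σ i (!σ i)) ≤ L σ)
    (hLj : L (Function.update σ j (!σ j)) ≤ L σ) :
    L (Function.update (Function.update σ i (!σ i)) j (!(Function.update σ i (!σ i)) j)) ≤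
      L σ := by
  
  classical
  have hσitrue : σ i = true := hP i hi
  have hσjfalse : σ j = false := hQ j hj
  have hij : i ≠ j := by
    intro h; rw [h, hσjfalse] at hσitrue; exact Bool.noConfusion hσitrue
  have hα0 : 0 < α := lt_of_lt_of_le hβ0 hβα
  have h1α : 0 < 1 - α := by linarith
  have h1β : 0 < 1 - β := by linarith
  have h1αβ : 1 - α ≤ 1 - β := by linarith
  have h1p : 0 < 1 - p := by linarith
  set σ₁ := Function.update σ i (!σ i) with hσ₁def
  set σ₂ := Function.update σ j (!σ j) with hσ₂def
  set σ₃ := Function.update σ₁ j (!σ₁ j) with hσ₃def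
  -- pointwise values
  have h1ne : ∀ r, r ≠ i → σ₁ r = σ r := by
    intro r hr; simp [hσ₁def, Function.update_apply, hr]
  have h2ne : ∀ r, r ≠ j → σ₂ r = σ r := by
    intro r hr; simp [hσ₂def, Function.update_apply, hr]
  have h1i : σ₁ i = false := by simp [hσ₁def, hσitrue]
  have h2j : σ₂ j = true := by simp [hσ₂def, hσjfalse]
  have h3ne : ∀ r, r ≠ i → r ≠ j → σ₃ r = σ r := by
    intro r hri hrj
    simp [hσ₃def, Function.update_apply, hrj, h1ne r hri]
  have h3i : σ₃ i = false := by
    simp [hσ₃def, Function.update_apply, hij, h1i]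
  have h3j : σ₃ j = true := by
    simp [hσ₃def, Function.update_apply, h1ne j (Ne.symm hij), hσjfalse]
  have h1j : σ₁ j = false := by rw [h1ne j (Ne.symm hij), hσjfalse]
  have h2i : σ₂ i = true := by rw [h2ne i hij, hσitrue]
  -- abbreviations
  set Rm : (Fin (2 * n') → Bool) → Fin (2 * n') → Fin M → ℝ :=
    fun σ' r c => lvl (if σ' r then u c else v c) with hRm
  -- positivity of entries
  have hentry : ∀ (σ' : Fin (2 * n') → Bool) (r : Fin (2 * n')) (c : Fin M),
      0 < entryProb p (Rm σ' r c) (Nm r c) := by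
    intro σ' r c
    have h0 : 0 < Rm σ' r c := hlvl0 _
    have h1 : Rm σ' r c < 1 := hlvl1 _
    rcases Nm r c with _ | b
    · simpa [entryProb] using h1p
    · cases b
      · simpa [entryProb] using mul_pos hp0 (by linarith)
      · simpa [entryProb] using mul_pos hp0 h0
  have hratpos : ∀ σ' : Fin (2 * n') → Bool, 0 < ratingLik p (Rm σ') Nm := by
    intro σ'
    exact Finset.prod_pos fun r _ => Finset.prod_pos fun c _ => hentry σ' r c
  have hfacpos : ∀ (σ' : Fin (2 * n') → Bool)
      (e : {e : Fin (2 * n') × Fin (2 * n') // e.1 < e.2}),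
      0 < (if σ' e.1.1 = σ' e.1.2 then (if g e then α else 1 - α)
        else (if g e then β else 1 - β)) := by
    intro σ' e
    split <;> split <;> assumption
  have hgrpos : ∀ σ' : Fin (2 * n') → Bool, 0 < graphLik α β σ' g := by
    intro σ'
    exact Finset.prod_pos fun e _ => hfacpos σ' e
  -- rating likelihood identity
  have hrat : ratingLik p (Rm σ₁) Nm * ratingLik p (Rm σ₂) Nm
      = ratingLik p (Rm σ₃) Nm * ratingLik p (Rm σ) Nm := by
    unfold ratingLik
    rw [← Finset.prod_mul_distrib, ← Finset.prod_mul_distrib]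
    refine Finset.prod_congr rfl fun r _ => ?_
    have hdep : ∀ (b : Bool) (σ' : Fin (2 * n') → Bool), σ' r = b →
        (∏ c, entryProb p (Rm σ' r c) (Nm r c))
          = ∏ c, entryProb p (lvl (if b then u c else v c)) (Nm r c) := by
      intro b σ' hb
      refine Finset.prod_congr rfl fun c _ => ?_
      simp [hRm, hb]
    by_cases hri : r = i
    · subst hri
      rw [hdep false σ₁ h1i, hdep true σ₂ h2i, hdep false σ₃ h3i, hdep true σ hσitrue]
    · by_cases hrj : r = j
      · subst hrj
        rw [hdep false σ₁ h1j, hdep true σ₂ h2j, hdep true σ₃ h3j,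
          hdep false σ hσjfalse]
        ring
      · rw [hdep (σ r) σ₁ (h1ne r hri), hdep (σ r) σ₂ (h2ne r hrj),
          hdep (σ r) σ₃ (h3ne r hri hrj), hdep (σ r) σ rfl]
  -- graph likelihood inequality
  have hgr : graphLik α β σ₁ g * graphLik α β σ₂ g
      ≤ graphLik α β σ₃ g * graphLik α β σ g := by
    unfold graphLik
    rw [← Finset.prod_mul_distrib, ← Finset.prod_mul_distrib]
    refine Finset.prod_le_prod (fun e _ => le_of_lt (mul_pos (hfacpos σ₁ e) (hfacpos σ₂ e)))
      (fun e _ => ?_)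
    obtain ⟨⟨a, b⟩, hab⟩ := e
    simp only []
    have hne : a ≠ b := ne_of_lt hab
    by_cases hai : a = i
    · by_cases hbj : b = j
      · -- special edge {i, j}
        have hge : g ⟨(a, b), hab⟩ = false := by
          by_contra h
          have h' : g ⟨(a, b), hab⟩ = true := by
            cases hg : g ⟨(a, b), hab⟩
            · exact absurd hg h
            · rfl
          exact hnoedge ⟨(a, b), hab⟩ h'
            ⟨Finset.mem_union_left _ (hai ▸ hi), Finset.mem_union_right _ (hbj ▸ hj)⟩
        subst hai; subst hbj
        rw [hge, h1i, h1j, h2i, h2j, h3i, h3j, hσitrue, hσjfalse]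
        norm_num
        nlinarith
      · have hbi : b ≠ i := fun h => hne (hai.trans h.symm)
        subst hai
        refine le_of_eq ?_
        rw [h1i, h3i, h2i, h1ne b hbi, h2ne b hbj, h3ne b hbi hbj, hσitrue]
    · by_cases haj : a = j
      · by_cases hbi : b = i
        · have hge : g ⟨(a, b), hab⟩ = false := by
            by_contra h
            have h' : g ⟨(a, b), hab⟩ = true := by
              cases hg : g ⟨(a, b), hab⟩
              · exact absurd hg h
              · rfl
            exact hnoedge ⟨(a, b), hab⟩ h'
              ⟨Finset.mem_union_right _ (haj ▸ hj), Finset.mem_union_left _ (hbi ▸ hi)⟩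
          subst haj; subst hbi
          rw [hge, h1j, h1i, h2j, h2i, h3j, h3i, hσjfalse, hσitrue]
          norm_num
          nlinarith
        · have hbj : b ≠ j := fun h => hne (haj.trans h.symm)
          subst haj
          refine le_of_eq ?_
          rw [h1j, h2j, h3j, h1ne b hbi, h2ne b hbj, h3ne b hbi hbj, hσjfalse]
          ring
      · by_cases hbi : b = i
        · subst hbi
          refine le_of_eq ?_
          rw [h1ne a hai, h2ne a haj, h3ne a hai haj, h1i, h3i, h2i, hσitrue]
        · by_cases hbj : b = j
          · subst hbj
            refine le_of_eq ?_
            rw [h1ne a hai, h2ne a haj, h3ne a hai haj, h1j, h2j, h3j, hσjfalse]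
            ring
          · refine le_of_eq ?_
            rw [h1ne a hai, h2ne a haj, h3ne a hai haj, h1ne b hbi, h2ne b hbj,
              h3ne b hbi hbj]
  -- combine into outcome probabilities
  have hpos : ∀ σ' : Fin (2 * n') → Bool, 0 < outcomeProb p α β (Rm σ') σ' Nm g := by
    intro σ'
    exact mul_pos (hratpos σ') (hgrpos σ')
  have hout : outcomeProb p α β (Rm σ₁) σ₁ Nm g * outcomeProb p α β (Rm σ₂) σ₂ Nm g
      ≤ outcomeProb p α β (Rm σ₃) σ₃ Nm g * outcomeProb p α β (Rm σ) σ Nm g := by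
    unfold outcomeProb
    calc ratingLik p (Rm σ₁) Nm * graphLik α β σ₁ g
          * (ratingLik p (Rm σ₂) Nm * graphLik α β σ₂ g)
        = ratingLik p (Rm σ₁) Nm * ratingLik p (Rm σ₂) Nm
          * (graphLik α β σ₁ g * graphLik α β σ₂ g) := by ring
      _ = ratingLik p (Rm σ₃) Nm * ratingLik p (Rm σ) Nm
          * (graphLik α β σ₁ g * graphLik α β σ₂ g) := by rw [hrat]
      _ ≤ ratingLik p (Rm σ₃) Nm * ratingLik p (Rm σ) Nm
          * (graphLik α β σ₃ g * graphLik α β σ g) := by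
            exact mul_le_mul_of_nonneg_left hgr
              (le_of_lt (mul_pos (hratpos σ₃) (hratpos σ)))
      _ = ratingLik p (Rm σ₃) Nm * graphLik α β σ₃ g
          * (ratingLik p (Rm σ) Nm * graphLik α β σ g) := by ring
  have hlog : Real.log (outcomeProb p α β (Rm σ₁) σ₁ Nm g)
      + Real.log (outcomeProb p α β (Rm σ₂) σ₂ Nm g)
      ≤ Real.log (outcomeProb p α β (Rm σ₃) σ₃ Nm g)
        + Real.log (outcomeProb p α β (Rm σ) σ Nm g) := by
    have := Real.log_le_log (mul_pos (hpos σ₁) (hpos σ₂)) hout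
    rwa [Real.log_mul (ne_of_gt (hpos σ₁)) (ne_of_gt (hpos σ₂)),
      Real.log_mul (ne_of_gt (hpos σ₃)) (ne_of_gt (hpos σ))] at this
  have hLval : ∀ σ' : Fin (2 * n') → Bool, L σ' = -Real.log (outcomeProb p α β (Rm σ') σ' Nm g) := by
    intro σ'; rw [hL]
  simp only [hLval] at hLi hLj ⊢
  linarith
end
end

section
/- In the two equal-sized cluster model, suppose a partition A_R^{(0)}, B_R^{(0)} of [n] satisfies |A_R^{(0)} \ A_R| = ηn with η → 0, suppose (1/2)·n·p·(d_H^min)² ≥ (1+ε)·log m for some ε > 0, and suppose level estimates p̂_1,...,p̂_d satisfy |p̂_k − p_k| = o(1) for all k (so in particular p̂_j/p̂_i = (p_j/p_i)(1+o(1)) and (1−p̂_j)/(1−p̂_i) = ((1−p_j)/(1−p_i))(1+o(1)) for all i,j). Define û^{(j)} = argmin over p̂_k, k ∈ [d], of Σ_{i∈A_R^{(0)}} [ 1(N^Ω_{ij}=1)·(−log p̂_k) + 1(N^Ω_{ij}=−1)·(−log(1−p̂_k)) ], and define v̂^{(j)} analogously with B_R^{(0)}. Then with probability approaching 1 as n →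 ∞, simultaneously for all j = 1,...,m: û^{(j)} = p̂_{a_j} and v̂^{(j)} = p̂_{b_j}, where (u_R)_j = p_{a_j} and (v_R)_j = p_{b_j}; consequently |û^{(j)} − (u_R)_j| = o(1) and |v̂^{(j)} − (v_R)_j| = o(1) uniformly in j. -/
open Filter Finset Asymptotics
open scoped Classical

noncomputable section

open Paper

/-- Per-column negative log-likelihood score of a candidate level `q` for the users in
`{i | c i = b}`. -/
def mlScore {N M : ℕ} (c : Fin N → Bool) (b : Bool) (q : ℝ)
    (Nm : RatingMatrix N M) (j : Fin M) : ℝ :=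
  ∑ i ∈ Finset.univ.filter (fun i => c i = b),
    ((if Nm i j = some true then (1 : ℝ) else 0) * (-Real.log q)
      + (if Nm i j = some false then (1 : ℝ) else 0) * (-Real.log (1 - q)))


set_option maxHeartbeats 2000000


section Helpers

variable {N M : ℕ}

lemma entryProb_nonneg {p r : ℝ} (hp0 : 0 ≤ p) (hp1 : p ≤ 1) (hr0 : 0 ≤ r) (hr1 : r ≤ 1) :
    ∀ o : Option Bool, 0 ≤ entryProb p r o
  | none => by simp only [entryProb]; linarith
  | some true => mul_nonneg hp0 hr0
  | some false => mul_nonneg hp0 (by linarith)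

lemma entryProb_sum (p r : ℝ) : ∑ o : Option Bool, entryProb p r o = 1 := by
  rw [Fintype.sum_option, Fintype.sum_bool]
  simp only [entryProb]; ring

lemma sum_prod_pi {ι β : Type*} [Fintype ι] [DecidableEq ι] [Fintype β] (Φ : ι → β → ℝ) :
    ∑ f : ι → β, ∏ i, Φ i (f i) = ∏ i, ∑ b : β, Φ i b := by
  rw [Finset.prod_univ_sum]
  rw [Fintype.piFinset_univ]

lemma ratingLik_nonneg {p : ℝ} (hp0 : 0 ≤ p) (hp1 : p ≤ 1) {R : Fin N → Fin M → ℝ}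
    (hR : ∀ i j, 0 ≤ R i j ∧ R i j ≤ 1) (Nm : RatingMatrix N M) : 0 ≤ ratingLik p R Nm :=
  Finset.prod_nonneg fun i _ => Finset.prod_nonneg fun j _ =>
    entryProb_nonneg hp0 hp1 (hR i j).1 (hR i j).2 _

lemma ratingLik_sum (p : ℝ) (R : Fin N → Fin M → ℝ) :
    ∑ Nm : RatingMatrix N M, ratingLik p R Nm = 1 := by
  unfold ratingLik
  rw [sum_prod_pi (fun (i : Fin N) (row : Fin M → Option Bool) => ∏ j, entryProb p (R i j) (row j))]
  have h2 : ∀ i : Fin N, ∑ row : Fin M → Option Bool, ∏ j, entryProb p (R i j) (row j) = 1 := by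
    intro i
    rw [sum_prod_pi]
    exact Finset.prod_eq_one fun j _ => entryProb_sum _ _
  simp [h2]

variable {p : ℝ} {R : Fin N → Fin M → ℝ}

lemma prRating_nonneg (hp0 : 0 ≤ p) (hp1 : p ≤ 1) (hR : ∀ i j, 0 ≤ R i j ∧ R i j ≤ 1)
    (S : RatingMatrix N M → Prop) : 0 ≤ prRating p R S :=
  Finset.sum_nonneg fun Nm _ => by
    split_ifs
    · exact ratingLik_nonneg hp0 hp1 hR Nm
    · exact le_refl 0

lemma prRating_mono (hp0 : 0 ≤ p) (hp1 : p ≤ 1) (hR : ∀ i j, 0 ≤ R i j ∧ R i j ≤ 1)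
    {S T : RatingMatrix N M → Prop} (h : ∀ Nm, S Nm → T Nm) :
    prRating p R S ≤ prRating p R T := by
  apply Finset.sum_le_sum
  intro Nm _
  by_cases hS : S Nm
  · rw [if_pos hS, if_pos (h Nm hS)]
  · rw [if_neg hS]
    split_ifs
    · exact ratingLik_nonneg hp0 hp1 hR Nm
    · exact le_refl 0

lemma prRating_eq_one (hp0 : 0 ≤ p) (hp1 : p ≤ 1) (hR : ∀ i j, 0 ≤ R i j ∧ R i j ≤ 1)
    {S : RatingMatrix N M → Prop} (h : ∀ Nm, S Nm) : prRating p R S = 1 := by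
  rw [← ratingLik_sum p R]
  exact Finset.sum_congr rfl fun Nm _ => if_pos (h Nm)

lemma prRating_le_one (hp0 : 0 ≤ p) (hp1 : p ≤ 1) (hR : ∀ i j, 0 ≤ R i j ∧ R i j ≤ 1)
    (S : RatingMatrix N M → Prop) : prRating p R S ≤ 1 := by
  rw [← prRating_eq_one hp0 hp1 hR (fun _ => trivial : ∀ _ : RatingMatrix N M, True)]
  exact prRating_mono hp0 hp1 hR fun _ _ => trivial

lemma prRating_add_compl (hp0 : 0 ≤ p) (hp1 : p ≤ 1) (hR : ∀ i j, 0 ≤ R i j ∧ R i j ≤ 1)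
    (S : RatingMatrix N M → Prop) :
    prRating p R S + prRating p R (fun Nm => ¬ S Nm) = 1 := by
  rw [← ratingLik_sum p R, prRating, prRating, ← Finset.sum_add_distrib]
  apply Finset.sum_congr rfl
  intro Nm _
  by_cases hS : S Nm <;> simp [hS]

lemma prRating_union {ι : Type*} (hp0 : 0 ≤ p) (hp1 : p ≤ 1)
    (hR : ∀ i j, 0 ≤ R i j ∧ R i j ≤ 1)
    (s : Finset ι) (S : ι → RatingMatrix N M → Prop) :
    prRating p R (fun Nm => ∃ x ∈ s, S x Nm) ≤ ∑ x ∈ s, prRating p R (S x) := by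
  unfold prRating
  rw [Finset.sum_comm]
  apply Finset.sum_le_sum
  intro Nm _
  by_cases hS : ∃ x ∈ s, S x Nm
  · rw [if_pos hS]
    obtain ⟨x, hx, hSx⟩ := hS
    calc ratingLik p R Nm = if S x Nm then ratingLik p R Nm else 0 := (if_pos hSx).symm
      _ ≤ ∑ y ∈ s, if S y Nm then ratingLik p R Nm else 0 :=
        Finset.single_le_sum (f := fun y => if S y Nm then ratingLik p R Nm else 0)
          (fun y _ => by
            by_cases hy : S y Nm <;> simp [hy, ratingLik_nonneg hp0 hp1 hR Nm]) hx
  · rw [if_neg hS]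
    exact Finset.sum_nonneg fun y _ => by
      by_cases hy : S y Nm <;> simp [hy, ratingLik_nonneg hp0 hp1 hR Nm]

end Helpers

section ColBound

variable {N M : ℕ}

lemma colBound {p : ℝ} (hp0 : 0 ≤ p) (hp1 : p ≤ 1) {R : Fin N → Fin M → ℝ}
    (hR : ∀ i j, 0 ≤ R i j ∧ R i j ≤ 1) (c : Fin N → Bool) (b : Bool) (j : Fin M)
    (qa qk : ℝ) :
    prRating p R (fun Nm => mlScore c b qk Nm j ≤ mlScore c b qa Nm j) ≤
      ∏ i ∈ Finset.univ.filter (fun i => c i = b),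
        (1 - p + p * (R i j * Real.exp ((Real.log qk - Real.log qa) / 2)
          + (1 - R i j) * Real.exp ((Real.log (1 - qk) - Real.log (1 - qa)) / 2))) := by
  classical
  set A : Finset (Fin N) := Finset.univ.filter (fun i => c i = b) with hA
  set Ea : ℝ := Real.exp ((Real.log qk - Real.log qa) / 2) with hEa
  set Eb : ℝ := Real.exp ((Real.log (1 - qk) - Real.log (1 - qa)) / 2) with hEb
  set g : Option Bool → ℝ := fun o => if o = some true then Ea else
    if o = some false then Eb else 1 with hg
  have hgn : g none = 1 := by simp [hg]
  have hgt : g (some true) = Ea := by simp [hg]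
  have hgf : g (some false) = Eb := by simp [hg]
  have hg0 : ∀ o, 0 ≤ g o := by
    intro o
    rcases o with _ | (_ | _) <;> simp [hg, hEa, hEb, Real.exp_nonneg, zero_le_one]
  -- g o = exp of half-difference of per-entry scores
  have hgexp : ∀ o : Option Bool, g o =
      Real.exp ((((if o = some true then (1:ℝ) else 0) * (-Real.log qa)
          + (if o = some false then (1:ℝ) else 0) * (-Real.log (1 - qa)))
        - ((if o = some true then (1:ℝ) else 0) * (-Real.log qk)
          + (if o = some false then (1:ℝ) else 0) * (-Real.log (1 - qk)))) / 2) := by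
    intro o
    rcases o with _ | (_ | _)
    · simp [hg]
    · simp only [hg, hEb, hEa]
      norm_num
      ring_nf
    · simp only [hg, hEb, hEa]
      norm_num
      ring_nf
  -- pointwise: on the event, 1 ≤ ∏ g
  have hpoint : ∀ Nm : RatingMatrix N M, mlScore c b qk Nm j ≤ mlScore c b qa Nm j →
      (1 : ℝ) ≤ ∏ i ∈ A, g (Nm i j) := by
    intro Nm hNm
    have hprod : ∏ i ∈ A, g (Nm i j)
        = Real.exp ((mlScore c b qa Nm j - mlScore c b qk Nm j) / 2) := by
      rw [Finset.prod_congr rfl (fun i _ => hgexp (Nm i j)), ← Real.exp_sum]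
      congr 1
      rw [mlScore, mlScore, ← Finset.sum_div, ← Finset.sum_sub_distrib]
    rw [hprod]
    rw [show (1:ℝ) = Real.exp 0 by simp]
    apply Real.exp_le_exp.2
    linarith
  -- step 2 : bound by the exponential-moment sum
  have hstep2 : prRating p R (fun Nm => mlScore c b qk Nm j ≤ mlScore c b qa Nm j)
      ≤ ∑ Nm : RatingMatrix N M, (∏ i ∈ A, g (Nm i j)) * ratingLik p R Nm := by
    apply Finset.sum_le_sum
    intro Nm _
    by_cases hS : mlScore c b qk Nm j ≤ mlScore c b qa Nm j
    · rw [if_pos hS]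
      have := hpoint Nm hS
      nlinarith [ratingLik_nonneg hp0 hp1 hR Nm]
    · rw [if_neg hS]
      exact mul_nonneg (Finset.prod_nonneg fun i _ => hg0 _) (ratingLik_nonneg hp0 hp1 hR Nm)
  refine hstep2.trans (le_of_eq ?_)
  -- step 3 : factorize
  have h1 : ∀ Nm : RatingMatrix N M, (∏ i ∈ A, g (Nm i j)) * ratingLik p R Nm
      = ∏ i, ((if i ∈ A then g (Nm i j) else 1) * ∏ j', entryProb p (R i j') (Nm i j')) := by
    intro Nm
    rw [Finset.prod_mul_distrib]
    congr 1
    rw [Finset.prod_ite_mem Finset.univ A (fun i => g (Nm i j)), Finset.univ_inter]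
  calc ∑ Nm : RatingMatrix N M, (∏ i ∈ A, g (Nm i j)) * ratingLik p R Nm
      = ∑ Nm : RatingMatrix N M,
          ∏ i, ((if i ∈ A then g (Nm i j) else 1) * ∏ j', entryProb p (R i j') (Nm i j')) :=
        Finset.sum_congr rfl fun Nm _ => h1 Nm
    _ = ∏ i, ∑ row : Fin M → Option Bool,
          ((if i ∈ A then g (row j) else 1) * ∏ j', entryProb p (R i j') (row j')) :=
        sum_prod_pi (fun (i : Fin N) (row : Fin M → Option Bool) =>
          (if i ∈ A then g (row j) else 1) * ∏ j', entryProb p (R i j') (row j'))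
    _ = ∏ i, (if i ∈ A then
          (1 - p + p * (R i j * Ea + (1 - R i j) * Eb)) else 1) := by
        apply Finset.prod_congr rfl
        intro i _
        have hrow : ∀ row : Fin M → Option Bool,
            (if i ∈ A then g (row j) else 1) * ∏ j', entryProb p (R i j') (row j')
            = ∏ j', (entryProb p (R i j') (row j')
                * (if j' = j then (if i ∈ A then g (row j') else 1) else 1)) := by
          intro row
          rw [Finset.prod_mul_distrib]
          rw [Finset.prod_ite_eq' Finset.univ j
            (fun j' => if i ∈ A then g (row j') else 1)]
          simp [mul_comm]
        rw [Finset.sum_congr rfl fun row _ => hrow row]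
        rw [sum_prod_pi (fun (j' : Fin M) (o : Option Bool) => entryProb p (R i j') o
          * (if j' = j then (if i ∈ A then g o else 1) else 1))]
        have hcol : ∀ j' : Fin M, (∑ o : Option Bool, entryProb p (R i j') o
              * (if j' = j then (if i ∈ A then g o else 1) else 1))
            = if j' = j then (if i ∈ A then (1 - p + p * (R i j * Ea + (1 - R i j) * Eb))
                else 1) else 1 := by
          intro j'
          by_cases hj : j' = j
          · subst hj
            simp only [eq_self_iff_true, if_true]
            by_cases hiA : i ∈ A
            · simp only [if_pos hiA]
              rw [Fintype.sum_option, Fintype.sum_bool]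
              simp only [entryProb, hgt, hgf, hgn]
              ring
            · simp only [if_neg hiA, mul_one]
              exact entryProb_sum _ _
          · simp only [if_neg hj, mul_one]
            exact entryProb_sum _ _
        rw [Finset.prod_congr rfl fun j' _ => hcol j']
        rw [Finset.prod_ite_eq' Finset.univ j
          (fun _ => if i ∈ A then (1 - p + p * (R i j * Ea + (1 - R i j) * Eb)) else 1)]
        simp
    _ = ∏ i ∈ A, (1 - p + p * (R i j * Ea + (1 - R i j) * Eb)) := by
        rw [Finset.prod_ite_mem Finset.univ A, Finset.univ_inter]

end ColBound

section Analytic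

lemma hellSq_eq' {x y : ℝ} (hx0 : 0 ≤ x) (hx1 : x ≤ 1) (hy0 : 0 ≤ y) (hy1 : y ≤ 1) :
    hellSq x y = 1 - (Real.sqrt x * Real.sqrt y + Real.sqrt (1 - x) * Real.sqrt (1 - y)) := by
  have e : ∀ a b : ℝ, (a - b) ^ 2 = a ^ 2 + b ^ 2 - 2 * (a * b) := by intro a b; ring
  rw [hellSq, e, e, Real.sq_sqrt hx0, Real.sq_sqrt hy0, Real.sq_sqrt (by linarith),
    Real.sq_sqrt (by linarith)]
  ring

lemma sqrt_as_exp {a b : ℝ} (ha : 0 < a) (hb : 0 < b) :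
    a * Real.exp ((Real.log b - Real.log a) / 2) = Real.sqrt a * Real.sqrt b := by
  have hsa : Real.sqrt a = Real.exp (Real.log a / 2) := by
    rw [Real.sqrt_eq_rpow, Real.rpow_def_of_pos ha]; ring_nf
  have hsb : Real.sqrt b = Real.exp (Real.log b / 2) := by
    rw [Real.sqrt_eq_rpow, Real.rpow_def_of_pos hb]; ring_nf
  calc a * Real.exp ((Real.log b - Real.log a) / 2)
      = Real.exp (Real.log a) * Real.exp ((Real.log b - Real.log a) / 2) := by
        rw [Real.exp_log ha]
    _ = Real.exp (Real.log a / 2) * Real.exp (Real.log b / 2) := by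
        rw [← Real.exp_add, ← Real.exp_add]; ring_nf
    _ = Real.sqrt a * Real.sqrt b := by rw [hsa, hsb]

lemma bc_eq {x y : ℝ} (hx0 : 0 < x) (hx1 : x < 1) (hy0 : 0 < y) (hy1 : y < 1) :
    x * Real.exp ((Real.log y - Real.log x) / 2)
      + (1 - x) * Real.exp ((Real.log (1 - y) - Real.log (1 - x)) / 2)
    = 1 - hellSq x y := by
  rw [sqrt_as_exp hx0 hy0, sqrt_as_exp (by linarith) (by linarith),
    hellSq_eq' hx0.le hx1.le hy0.le hy1.le]
  ring

lemma hellSq_pos' {x y : ℝ} (hx0 : 0 ≤ x) (hy0 : 0 ≤ y) (hxy : x ≠ y) : 0 < hellSq x y := by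
  have hne : Real.sqrt x - Real.sqrt y ≠ 0 := by
    intro h
    exact hxy ((Real.sqrt_inj hx0 hy0).1 (by linarith [sub_eq_zero.1 h]))
  have h1 : 0 < (Real.sqrt x - Real.sqrt y) ^ 2 :=
    (sq_nonneg _).lt_of_ne (Ne.symm (pow_ne_zero 2 hne))
  have h2 : 0 ≤ (Real.sqrt (1 - x) - Real.sqrt (1 - y)) ^ 2 := sq_nonneg _
  rw [hellSq]; linarith

variable {d : ℕ} (lvl : Fin d → ℝ)

lemma dHminSq_finite :
    {h : ℝ | ∃ i j : Fin d, i ≠ j ∧ h = hellSq (lvl i) (lvl j)}.Finite := by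
  apply Set.Finite.subset (Set.finite_range fun q : Fin d × Fin d => hellSq (lvl q.1) (lvl q.2))
  rintro h ⟨i, j, hij, rfl⟩
  exact ⟨(i, j), rfl⟩

lemma dHminSq_le {a k : Fin d} (hak : a ≠ k) : dHminSq lvl ≤ hellSq (lvl a) (lvl k) :=
  csInf_le (dHminSq_finite lvl).bddBelow ⟨a, k, hak, rfl⟩

lemma dHminSq_pos (hd : 2 ≤ d) (hinj : Function.Injective lvl)
    (hlvl0 : ∀ t, 0 < lvl t) : 0 < dHminSq lvl := by
  have h01 : (⟨0, by omega⟩ : Fin d) ≠ ⟨1, by omega⟩ := by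
    intro h; simpa using congrArg Fin.val h
  have hne : {h : ℝ | ∃ i j : Fin d, i ≠ j ∧ h = hellSq (lvl i) (lvl j)}.Nonempty :=
    ⟨_, ⟨_, _, h01, rfl⟩⟩
  obtain ⟨i, j, hij, heq⟩ := hne.csInf_mem (dHminSq_finite lvl)
  rw [dHminSq, heq]
  exact hellSq_pos' (hlvl0 i).le (hlvl0 j).le (fun h => hij (hinj h))

end Analytic

section ProdBound

lemma prodBound {N M : ℕ} {p dstar δ0 C : ℝ} (hp0 : 0 ≤ p) (hp1 : p ≤ 1)
    {R : Fin N → Fin M → ℝ} (hR : ∀ i j, 0 ≤ R i j ∧ R i j ≤ 1)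
    {A W : Finset (Fin N)} (hWA : W ⊆ A) (j : Fin M) {Ea Eb : ℝ}
    (hEa0 : 0 ≤ Ea) (hEb0 : 0 ≤ Eb)
    (hcorrect : ∀ i ∈ A, i ∉ W → R i j * Ea + (1 - R i j) * Eb ≤ 1 - dstar * (1 - δ0))
    (hwrong : Ea + Eb ≤ C)
    (hds : 0 ≤ dstar * (1 - δ0)) :
    ∏ i ∈ A, (1 - p + p * (R i j * Ea + (1 - R i j) * Eb))
      ≤ Real.exp (((A.card - W.card : ℕ) : ℝ) * (-(p * (dstar * (1 - δ0))))
          + (W.card : ℝ) * (p * C)) := by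
  have hB0 : ∀ i : Fin N, 0 ≤ R i j * Ea + (1 - R i j) * Eb := fun i =>
    add_nonneg (mul_nonneg (hR i j).1 hEa0) (mul_nonneg (by linarith [(hR i j).2]) hEb0)
  have hf0 : ∀ i : Fin N, 0 ≤ 1 - p + p * (R i j * Ea + (1 - R i j) * Eb) := fun i => by
    have := mul_nonneg hp0 (hB0 i); linarith
  have hsplit : (∏ i ∈ A \ W, (1 - p + p * (R i j * Ea + (1 - R i j) * Eb)))
      * ∏ i ∈ W, (1 - p + p * (R i j * Ea + (1 - R i j) * Eb))
      = ∏ i ∈ A, (1 - p + p * (R i j * Ea + (1 - R i j) * Eb)) := Finset.prod_sdiff hWA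
  rw [← hsplit]
  have hc : ∏ i ∈ A \ W, (1 - p + p * (R i j * Ea + (1 - R i j) * Eb))
      ≤ Real.exp (-(p * (dstar * (1 - δ0)))) ^ (A \ W).card := by
    rw [← Finset.prod_const]
    apply Finset.prod_le_prod (fun i _ => hf0 i)
    intro i hi
    rw [Finset.mem_sdiff] at hi
    have hBle := hcorrect i hi.1 hi.2
    have h1 : 1 - p + p * (R i j * Ea + (1 - R i j) * Eb)
        ≤ Real.exp (-(p * (1 - (R i j * Ea + (1 - R i j) * Eb)))) := by
      have := Real.add_one_le_exp (-(p * (1 - (R i j * Ea + (1 - R i j) * Eb))))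
      linarith
    refine h1.trans (Real.exp_le_exp.2 ?_)
    nlinarith
  have hw : ∏ i ∈ W, (1 - p + p * (R i j * Ea + (1 - R i j) * Eb))
      ≤ Real.exp (p * C) ^ W.card := by
    rw [← Finset.prod_const]
    apply Finset.prod_le_prod (fun i _ => hf0 i)
    intro i _
    have hBle : R i j * Ea + (1 - R i j) * Eb ≤ C := by
      have h1 : R i j * Ea ≤ Ea := by nlinarith [(hR i j).1, (hR i j).2]
      have h2 : (1 - R i j) * Eb ≤ Eb := by nlinarith [(hR i j).1, (hR i j).2]
      linarith
    have h1 : 1 - p + p * (R i j * Ea + (1 - R i j) * Eb) ≤ 1 + p * (C - 1) := by nlinarith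
    refine h1.trans ?_
    have h2 := Real.add_one_le_exp (p * (C - 1))
    have h3 : Real.exp (p * (C - 1)) ≤ Real.exp (p * C) := Real.exp_le_exp.2 (by nlinarith)
    linarith
  have hcard : (A \ W).card = A.card - W.card := Finset.card_sdiff_of_subset hWA
  calc (∏ i ∈ A \ W, (1 - p + p * (R i j * Ea + (1 - R i j) * Eb)))
        * ∏ i ∈ W, (1 - p + p * (R i j * Ea + (1 - R i j) * Eb))
      ≤ Real.exp (-(p * (dstar * (1 - δ0)))) ^ (A \ W).card * Real.exp (p * C) ^ W.card := by
        apply mul_le_mul hc hw (Finset.prod_nonneg fun i _ => hf0 i)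
          (pow_nonneg (Real.exp_nonneg _) _)
    _ = Real.exp (((A.card - W.card : ℕ) : ℝ) * (-(p * (dstar * (1 - δ0))))
          + (W.card : ℝ) * (p * C)) := by
        rw [hcard, ← Real.exp_nat_mul, ← Real.exp_nat_mul, ← Real.exp_add]

end ProdBound


/-- Lemma 9: in the two equal-sized cluster model (with `2n` users), if
the initial partition has misclassification fraction `η → 0`,
`(1/2)·n·p·(d_H^min)² ≥ (1+ε)·log m`, and the level estimates satisfy `|p̂_k − p_k| = o(1)`,
then for any likelihood-minimizing selections `û, v̂`, with probability tending to `1`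
simultaneously for all columns `j`: `û^{(j)} = p̂_{a_j}` and `v̂^{(j)} = p̂_{b_j}` (where
`(u_R)_j = p_{a_j}`, `(v_R)_j = p_{b_j}`); consequently the estimated vectors converge
uniformly to the ground-truth latent preference vectors. -/
theorem statement15
    (d : ℕ) (hd : 1 ≤ d) (lvl : Fin d → ℝ)
    (hmono : StrictMono lvl) (hlvl0 : ∀ t, 0 < lvl t) (hlvl1 : ∀ t, lvl t < 1)
    (m : ℕ → ℕ) (p : ℕ → ℝ) (hp : ∀ n, 0 ≤ p n ∧ p n ≤ 1)
    (hm : (fun n : ℕ => Real.log (2 * (n : ℝ))) =o[atTop] fun n : ℕ => ((m n : ℝ)))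
    (hlogm : (fun n : ℕ => Real.log (m n)) =o[atTop] fun n : ℕ => (2 * (n : ℝ)))
    (σ : (n : ℕ) → Fin (2 * n) → Bool)
    (hbal : ∀ n, (Finset.univ.filter fun i => σ n i = true).card = n)
    (u v : (n : ℕ) → Fin (m n) → Fin d)
    (σ₀ : (n : ℕ) → Fin (2 * n) → Bool)
    (hbal₀ : ∀ n, (Finset.univ.filter fun i => σ₀ n i = true).card = n)
    (hη : Tendsto (fun n : ℕ =>
      ((Finset.univ.filter fun i => σ₀ n i = true ∧ σ n i = false).card : ℝ) / (2 * (n : ℝ)))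
      atTop (nhds 0))
    (ε : ℝ) (hε : 0 < ε)
    (hthr : ∀ n : ℕ, (n : ℝ) * p n * dHminSq lvl ≥ (1 + ε) * Real.log (m n))
    -- level estimates with `|p̂_k − p_k| = o(1)`
    (phat : ℕ → Fin d → ℝ)
    (hphat : ∀ k : Fin d, Tendsto (fun n => phat n k) atTop (nhds (lvl k)))
    -- arbitrary likelihood-minimizing selections defining `û` and `v̂`
    (uhat vhat : (n : ℕ) → RatingMatrix (2 * n) (m n) → Fin (m n) → Fin d)
    (huhat : ∀ n Nm j k, mlScore (σ₀ n) true (phat n (uhat n Nm j)) Nm j ≤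
      mlScore (σ₀ n) true (phat n k) Nm j)
    (hvhat : ∀ n Nm j k, mlScore (σ₀ n) false (phat n (vhat n Nm j)) Nm j ≤
      mlScore (σ₀ n) false (phat n k) Nm j) :
    Tendsto (fun n =>
        prRating (p n) (fun i j => lvl (if σ n i then u n j else v n j))
          (fun Nm => ∀ j, phat n (uhat n Nm j) = phat n (u n j) ∧
            phat n (vhat n Nm j) = phat n (v n j)))
      atTop (nhds 1)
    ∧ ∀ δ : ℝ, 0 < δ →
      Tendsto (fun n =>
          prRating (p n) (fun i j => lvl (if σ n i then u n j else v n j))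
            (fun Nm => ∀ j, |phat n (uhat n Nm j) - lvl (u n j)| ≤ δ ∧
              |phat n (vhat n Nm j) - lvl (v n j)| ≤ δ))
        atTop (nhds 1) := by
  classical
  have hp0 : ∀ n, 0 ≤ p n := fun n => (hp n).1
  have hp1 : ∀ n, p n ≤ 1 := fun n => (hp n).2
  have hRb : ∀ n : ℕ, ∀ (i : Fin (2 * n)) (j : Fin (m n)),
      0 ≤ lvl (if σ n i then u n j else v n j) ∧ lvl (if σ n i then u n j else v n j) ≤ 1 :=
    fun n i j => ⟨(hlvl0 _).le, (hlvl1 _).le⟩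
  have habs : ∀ δ' : ℝ, 0 < δ' → ∀ᶠ n in atTop, ∀ k : Fin d, |phat n k - lvl k| ≤ δ' := by
    intro δ' hδ'
    rw [Filter.eventually_all]
    intro k
    have h0 : Tendsto (fun n => |phat n k - lvl k|) atTop (nhds 0) := by
      have h1 := ((hphat k).sub (tendsto_const_nhds (x := lvl k))).abs
      simpa using h1
    exact (h0.eventually_lt_const hδ').mono fun n hn => hn.le
  by_cases hd2 : 2 ≤ d
  · -- main case d ≥ 2
    set dstar := dHminSq lvl with hdstar
    have hdpos : 0 < dstar := dHminSq_pos lvl hd2 hmono.injective hlvl0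
    have hdle : ∀ a k : Fin d, a ≠ k → dstar ≤ hellSq (lvl a) (lvl k) :=
      fun a k h => dHminSq_le lvl h
    set δ0 : ℝ := ε / (4 * (1 + ε)) with hδ0
    have hδ0pos : 0 < δ0 := div_pos hε (by positivity)
    have hδ0lt : δ0 < 1 / 2 := by
      rw [hδ0, div_lt_iff₀ (by positivity)]
      nlinarith
    have hδeq : (1 + ε) * (1 - 2 * δ0) = 1 + ε / 2 := by
      rw [hδ0]; field_simp; ring
    set EL : Fin d → Fin d → ℝ :=
      fun a k => Real.exp ((Real.log (lvl k) - Real.log (lvl a)) / 2) with hEL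
    set EL' : Fin d → Fin d → ℝ :=
      fun a k => Real.exp ((Real.log (1 - lvl k) - Real.log (1 - lvl a)) / 2) with hEL'
    set C : ℝ := 1 + ∑ q : Fin d × Fin d, (EL q.1 q.2 + EL' q.1 q.2) with hC
    have hsumnn : 0 ≤ ∑ q : Fin d × Fin d, (EL q.1 q.2 + EL' q.1 q.2) :=
      Finset.sum_nonneg fun q _ => add_nonneg (Real.exp_nonneg _) (Real.exp_nonneg _)
    have hC1 : 1 ≤ C := by rw [hC]; linarith
    have hTEa : ∀ a k : Fin d, Tendsto
        (fun n => Real.exp ((Real.log (phat n k) - Real.log (phat n a)) / 2))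
        atTop (nhds (EL a k)) := by
      intro a k
      have hlog : ∀ t : Fin d, Tendsto (fun n => Real.log (phat n t)) atTop
          (nhds (Real.log (lvl t))) := fun t =>
        ((Real.continuousAt_log (ne_of_gt (hlvl0 t))).tendsto).comp (hphat t)
      exact (Real.continuous_exp.continuousAt.tendsto).comp (((hlog k).sub (hlog a)).div_const 2)
    have hTEb : ∀ a k : Fin d, Tendsto
        (fun n => Real.exp ((Real.log (1 - phat n k) - Real.log (1 - phat n a)) / 2))
        atTop (nhds (EL' a k)) := by
      intro a k
      have hlog : ∀ t : Fin d, Tendsto (fun n => Real.log (1 - phat n t)) atTop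
          (nhds (Real.log (1 - lvl t))) := fun t =>
        ((Real.continuousAt_log (ne_of_gt (by linarith [hlvl1 t]))).tendsto).comp
          (tendsto_const_nhds.sub (hphat t))
      exact (Real.continuous_exp.continuousAt.tendsto).comp (((hlog k).sub (hlog a)).div_const 2)
    have hF1 : ∀ᶠ n in atTop, ∀ a k : Fin d, a ≠ k →
        lvl a * Real.exp ((Real.log (phat n k) - Real.log (phat n a)) / 2)
          + (1 - lvl a) * Real.exp ((Real.log (1 - phat n k) - Real.log (1 - phat n a)) / 2)
          ≤ 1 - dstar * (1 - δ0) := by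
      rw [Filter.eventually_all]; intro a
      rw [Filter.eventually_all]; intro k
      by_cases hak : a = k
      · exact Eventually.of_forall fun n h => absurd hak h
      · have hT : Tendsto (fun n =>
            lvl a * Real.exp ((Real.log (phat n k) - Real.log (phat n a)) / 2)
              + (1 - lvl a) * Real.exp ((Real.log (1 - phat n k) - Real.log (1 - phat n a)) / 2))
            atTop (nhds (lvl a * EL a k + (1 - lvl a) * EL' a k)) :=
          ((hTEa a k).const_mul _).add ((hTEb a k).const_mul _)
        have hlim : lvl a * EL a k + (1 - lvl a) * EL' a k = 1 - hellSq (lvl a) (lvl k) :=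
          bc_eq (hlvl0 a) (hlvl1 a) (hlvl0 k) (hlvl1 k)
        rw [hlim] at hT
        have hlt : 1 - hellSq (lvl a) (lvl k) < 1 - dstar * (1 - δ0) := by
          have h1 := hdle a k hak
          nlinarith
        exact (hT.eventually_lt_const hlt).mono fun n h _ => h.le
    have hF2 : ∀ᶠ n in atTop, ∀ a k : Fin d,
        Real.exp ((Real.log (phat n k) - Real.log (phat n a)) / 2)
          + Real.exp ((Real.log (1 - phat n k) - Real.log (1 - phat n a)) / 2) ≤ C := by
      rw [Filter.eventually_all]; intro a
      rw [Filter.eventually_all]; intro k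
      have hT := (hTEa a k).add (hTEb a k)
      have hlt : EL a k + EL' a k < C := by
        have hterm := Finset.single_le_sum
          (f := fun q : Fin d × Fin d => EL q.1 q.2 + EL' q.1 q.2)
          (fun q _ => add_nonneg (Real.exp_nonneg _) (Real.exp_nonneg _))
          (Finset.mem_univ (a, k))
        have hterm' : EL a k + EL' a k ≤ ∑ q : Fin d × Fin d, (EL q.1 q.2 + EL' q.1 q.2) := hterm
        rw [hC]; linarith
      exact (hT.eventually_lt_const hlt).mono fun n h => h.le
    set wseq : ℕ → ℕ :=
      fun n => (Finset.univ.filter fun i => σ₀ n i = true ∧ σ n i = false).card with hwseq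
    have hCpos : 0 < dstar + C := by linarith
    have hF3 : ∀ᶠ n in atTop, (wseq n : ℝ) * (dstar + C) ≤ (n : ℝ) * (dstar * δ0) := by
      have hc0 : 0 < dstar * δ0 / (2 * (dstar + C)) := by positivity
      have h1 := hη.eventually_lt_const hc0
      have h2 : ∀ᶠ n : ℕ in atTop, (1 : ℝ) ≤ (n : ℝ) :=
        tendsto_natCast_atTop_atTop.eventually_ge_atTop 1
      filter_upwards [h1, h2] with n hn h1n
      have h2n : (0 : ℝ) < 2 * (n : ℝ) := by linarith
      rw [div_lt_iff₀ h2n] at hn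
      have h3 : (wseq n : ℝ) * (dstar + C)
          < dstar * δ0 / (2 * (dstar + C)) * (2 * (n : ℝ)) * (dstar + C) :=
        mul_lt_mul_of_pos_right hn hCpos
      have heq : dstar * δ0 / (2 * (dstar + C)) * (2 * (n : ℝ)) * (dstar + C)
          = (n : ℝ) * (dstar * δ0) := by
        field_simp
      exact le_of_lt (heq ▸ h3)
    have hmtop : Tendsto (fun n => (m n : ℝ)) atTop atTop := by
      have hb := hm.def one_pos
      have hlt : Tendsto (fun n : ℕ => Real.log (2 * (n : ℝ))) atTop atTop :=
        Real.tendsto_log_atTop.comp (Tendsto.const_mul_atTop two_pos tendsto_natCast_atTop_atTop)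
      apply tendsto_atTop_mono' atTop ?_ hlt
      filter_upwards [hb] with n hn
      have h1 : Real.log (2 * (n : ℝ)) ≤ |Real.log (2 * (n : ℝ))| := le_abs_self _
      rw [Real.norm_eq_abs, Real.norm_eq_abs, one_mul] at hn
      have h2 : |(m n : ℝ)| = (m n : ℝ) := abs_of_nonneg (by positivity)
      linarith
    have hF5 : ∀ᶠ n in atTop, (1 : ℝ) ≤ (m n : ℝ) := hmtop.eventually_ge_atTop 1
    have herr : Tendsto (fun n => 2 * (d : ℝ) * (m n : ℝ) ^ (-(ε / 2)) ) atTop (nhds 0) := by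
      have h' := (tendsto_rpow_neg_atTop (y := ε / 2) (by positivity)).comp hmtop
      have h'' := h'.const_mul (2 * (d : ℝ))
      simpa using h''
    have keybound : ∀ᶠ n in atTop,
        1 - 2 * (d : ℝ) * (m n : ℝ) ^ (-(ε / 2)) ≤
          prRating (p n) (fun i j => lvl (if σ n i then u n j else v n j))
            (fun Nm => ∀ j, phat n (uhat n Nm j) = phat n (u n j) ∧
              phat n (vhat n Nm j) = phat n (v n j)) := by
      filter_upwards [hF1, hF2, hF3, hF5] with n h1 h2 h3 h5
      set Rn : Fin (2 * n) → Fin (m n) → ℝ :=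
        fun i j => lvl (if σ n i then u n j else v n j) with hRn
      have hRb' : ∀ i j, 0 ≤ Rn i j ∧ Rn i j ≤ 1 := fun i j => ⟨(hlvl0 _).le, (hlvl1 _).le⟩
      set G : RatingMatrix (2 * n) (m n) → Prop := fun Nm =>
        ∀ j, phat n (uhat n Nm j) = phat n (u n j) ∧
          phat n (vhat n Nm j) = phat n (v n j) with hG
      set Bad : (Fin (m n) × Fin d × Bool) → RatingMatrix (2 * n) (m n) → Prop := fun x Nm =>
        phat n x.2.1 ≠ phat n ((if x.2.2 then u n else v n) x.1) ∧
        mlScore (σ₀ n) x.2.2 (phat n x.2.1) Nm x.1 ≤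
          mlScore (σ₀ n) x.2.2 (phat n ((if x.2.2 then u n else v n) x.1)) Nm x.1 with hBad
      have hGBad : ∀ Nm, ¬ G Nm →
          ∃ x ∈ (Finset.univ : Finset (Fin (m n) × Fin d × Bool)), Bad x Nm := by
        intro Nm hNm
        obtain ⟨j, hj⟩ := not_forall.1 hNm
        by_cases hu : phat n (uhat n Nm j) = phat n (u n j)
        · have hv : ¬ phat n (vhat n Nm j) = phat n (v n j) := fun hv => hj ⟨hu, hv⟩
          exact ⟨(j, vhat n Nm j, false), Finset.mem_univ _, hv, hvhat n Nm j (v n j)⟩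
        · exact ⟨(j, uhat n Nm j, true), Finset.mem_univ _, hu, huhat n Nm j (u n j)⟩
      -- cardinality facts
      have hcard_univ : (Finset.univ : Finset (Fin (2 * n))).card = 2 * n := by
        simp
      have hAcard : ∀ side : Bool,
          (Finset.univ.filter fun i => σ₀ n i = side).card = n := by
        intro side
        cases side
        · have hsplit := Finset.card_filter_add_card_filter_not
            (s := (Finset.univ : Finset (Fin (2 * n)))) (p := fun i => σ₀ n i = true)
          have he : Finset.univ.filter (fun i => ¬ (σ₀ n i = true))
              = Finset.univ.filter (fun i => σ₀ n i = false) := by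
            apply Finset.filter_congr
            intro i _
            simp [Bool.not_eq_true]
          rw [hbal₀ n, he, hcard_univ] at hsplit
          omega
        · exact hbal₀ n
      have hWcard : ∀ side : Bool,
          ((Finset.univ.filter fun i => σ₀ n i = side).filter
            (fun i => ¬ (σ n i = side))).card = wseq n := by
        intro side
        cases side
        · -- side = false : card {σ₀ = false ∧ σ = true} = wseq n
          rw [Finset.filter_filter]
          have he : Finset.univ.filter (fun i => σ₀ n i = false ∧ ¬ (σ n i = false))
              = Finset.univ.filter (fun i => σ n i = true ∧ σ₀ n i = false) := by
            apply Finset.filter_congr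
            intro i _
            cases hσ : σ n i <;> cases hσ₀ : σ₀ n i <;> simp
          rw [he]
          -- counting argument
          have hsplit1 := Finset.card_filter_add_card_filter_not
            (s := Finset.univ.filter (fun i : Fin (2 * n) => σ n i = true))
            (p := fun i => σ₀ n i = true)
          have hsplit2 := Finset.card_filter_add_card_filter_not
            (s := Finset.univ.filter (fun i : Fin (2 * n) => σ₀ n i = true))
            (p := fun i => σ n i = true)
          rw [Finset.filter_filter, Finset.filter_filter, hbal n] at hsplit1
          rw [Finset.filter_filter, Finset.filter_filter, hbal₀ n] at hsplit2
          have he1 : Finset.univ.filter (fun i => σ n i = true ∧ ¬ (σ₀ n i = true))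
              = Finset.univ.filter (fun i : Fin (2 * n) => σ n i = true ∧ σ₀ n i = false) := by
            apply Finset.filter_congr
            intro i _
            cases hσ : σ n i <;> cases hσ₀ : σ₀ n i <;> simp
          have he2 : Finset.univ.filter (fun i => σ₀ n i = true ∧ ¬ (σ n i = true))
              = Finset.univ.filter (fun i : Fin (2 * n) => σ₀ n i = true ∧ σ n i = false) := by
            apply Finset.filter_congr
            intro i _
            cases hσ : σ n i <;> cases hσ₀ : σ₀ n i <;> simp
          have he3 : Finset.univ.filter (fun i => σ n i = true ∧ σ₀ n i = true)
              = Finset.univ.filter (fun i : Fin (2 * n) => σ₀ n i = true ∧ σ n i = true) := by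
            apply Finset.filter_congr
            intro i _
            cases hσ : σ n i <;> cases hσ₀ : σ₀ n i <;> simp
          rw [he1, he3] at hsplit1
          rw [he2] at hsplit2
          have hkey : (Finset.univ.filter (fun i : Fin (2*n) => σ n i = true ∧ σ₀ n i = false)).card
              = (Finset.univ.filter (fun i : Fin (2*n) => σ₀ n i = true ∧ σ n i = false)).card := by
            omega
          rw [hkey]
        · -- side = true
          rw [Finset.filter_filter]
          have he : Finset.univ.filter (fun i => σ₀ n i = true ∧ ¬ (σ n i = true))
              = Finset.univ.filter (fun i : Fin (2 * n) => σ₀ n i = true ∧ σ n i = false) := by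
            apply Finset.filter_congr
            intro i _
            cases hσ : σ n i <;> cases hσ₀ : σ₀ n i <;> simp
          rw [he]
      -- per-event bound
      have e0nonneg : (0 : ℝ) ≤ Real.exp (-(1 + ε / 2) * Real.log (m n)) := Real.exp_nonneg _
      have hxbound : ∀ x : Fin (m n) × Fin d × Bool,
          prRating (p n) Rn (Bad x) ≤ Real.exp (-(1 + ε / 2) * Real.log (m n)) := by
        rintro ⟨j, k, side⟩
        set a : Fin d := (if side then u n else v n) j with ha
        by_cases hk : k = a
        · have hmono0 : prRating (p n) Rn (Bad (j, k, side)) ≤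
              prRating (p n) Rn (fun _ => False) :=
            prRating_mono (hp0 n) (hp1 n) hRb' (fun Nm hB => hB.1 (by rw [hk]))
          have hzero : prRating (p n) Rn (fun _ : RatingMatrix (2 * n) (m n) => False) = 0 := by
            simp [prRating]
          rw [hzero] at hmono0
          linarith
        · have hak : a ≠ k := fun h => hk h.symm
          have hmono1 : prRating (p n) Rn (Bad (j, k, side)) ≤ prRating (p n) Rn
              (fun Nm => mlScore (σ₀ n) side (phat n k) Nm j ≤
                mlScore (σ₀ n) side (phat n a) Nm j) :=
            prRating_mono (hp0 n) (hp1 n) hRb' (fun Nm hB => hB.2)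
          have hcol := colBound (hp0 n) (hp1 n) hRb' (σ₀ n) side j (phat n a) (phat n k)
          -- the product bound
          have hWA : (Finset.univ.filter fun i => σ₀ n i = side).filter
              (fun i => ¬ (σ n i = side)) ⊆ (Finset.univ.filter fun i => σ₀ n i = side) :=
            Finset.filter_subset _ _
          have hcorrect : ∀ i ∈ (Finset.univ.filter fun i => σ₀ n i = side),
              i ∉ (Finset.univ.filter fun i => σ₀ n i = side).filter
                (fun i => ¬ (σ n i = side)) →
              Rn i j * Real.exp ((Real.log (phat n k) - Real.log (phat n a)) / 2)
                + (1 - Rn i j) *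
                  Real.exp ((Real.log (1 - phat n k) - Real.log (1 - phat n a)) / 2)
                ≤ 1 - dstar * (1 - δ0) := by
            intro i hiA hiW
            have hσ₀i : σ₀ n i = side := (Finset.mem_filter.1 hiA).2
            have hσi : σ n i = side := by
              by_contra hc
              exact hiW (Finset.mem_filter.2 ⟨hiA, hc⟩)
            have hRni : Rn i j = lvl a := by
              rw [hRn]
              cases side
              · rw [ha]
                simp [hσi]
              · rw [ha]
                simp [hσi]
            rw [hRni]
            exact h1 a k hak
          have hprod := prodBound (hp0 n) (hp1 n) hRb' hWA j
            (Real.exp_nonneg ((Real.log (phat n k) - Real.log (phat n a)) / 2))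
            (Real.exp_nonneg ((Real.log (1 - phat n k) - Real.log (1 - phat n a)) / 2))
            hcorrect (h2 a k) (by nlinarith)
          -- exponent arithmetic
          have hwle : wseq n ≤ n := by
            have := Finset.card_le_card hWA
            rw [hWcard side, hAcard side] at this
            exact this
          have hexp : (((Finset.univ.filter fun i => σ₀ n i = side).card
                - ((Finset.univ.filter fun i => σ₀ n i = side).filter
                    (fun i => ¬ (σ n i = side))).card : ℕ) : ℝ)
                  * (-(p n * (dstar * (1 - δ0))))
                + (((Finset.univ.filter fun i => σ₀ n i = side).filter
                    (fun i => ¬ (σ n i = side))).card : ℝ) * (p n * C)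
              ≤ -(1 + ε / 2) * Real.log (m n) := by
            rw [hAcard side, hWcard side, Nat.cast_sub hwle]
            calc ((n : ℝ) - wseq n) * (-(p n * (dstar * (1 - δ0)))) + (wseq n : ℝ) * (p n * C)
                = -(p n * (dstar * (1 - δ0)) * n)
                  + p n * ((wseq n : ℝ) * (dstar * (1 - δ0)) + (wseq n : ℝ) * C) := by ring
              _ ≤ -(p n * (dstar * (1 - δ0)) * n) + p n * ((n : ℝ) * (dstar * δ0)) := by
                  have hw0 : (0 : ℝ) ≤ (wseq n : ℝ) := Nat.cast_nonneg _
                  have a1 : (wseq n : ℝ) * (dstar * (1 - δ0)) + (wseq n : ℝ) * C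
                      ≤ (n : ℝ) * (dstar * δ0) := by
                    linarith [h3, mul_nonneg (mul_nonneg hw0 hdpos.le) hδ0pos.le]
                  have a2 := mul_le_mul_of_nonneg_left a1 (hp0 n)
                  linarith
              _ = -(((n : ℝ) * p n * dstar) * (1 - 2 * δ0)) := by ring
              _ ≤ -((1 + ε) * Real.log (m n) * (1 - 2 * δ0)) := by
                  have h2δ : (0 : ℝ) ≤ 1 - 2 * δ0 := by linarith
                  nlinarith [mul_le_mul_of_nonneg_right (hthr n) h2δ]
              _ = -(1 + ε / 2) * Real.log (m n) := by rw [← hδeq]; ring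
          calc prRating (p n) Rn (Bad (j, k, side))
              ≤ prRating (p n) Rn (fun Nm => mlScore (σ₀ n) side (phat n k) Nm j ≤
                  mlScore (σ₀ n) side (phat n a) Nm j) := hmono1
            _ ≤ _ := hcol
            _ ≤ _ := hprod
            _ ≤ Real.exp (-(1 + ε / 2) * Real.log (m n)) := Real.exp_le_exp.2 hexp
      -- union bound and conclusion
      have hnG : prRating (p n) Rn (fun Nm => ¬ G Nm)
          ≤ 2 * (d : ℝ) * (m n : ℝ) ^ (-(ε / 2)) := by
        have hstep1 : prRating (p n) Rn (fun Nm => ¬ G Nm) ≤ prRating (p n) Rn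
            (fun Nm => ∃ x ∈ (Finset.univ : Finset (Fin (m n) × Fin d × Bool)), Bad x Nm) :=
          prRating_mono (hp0 n) (hp1 n) hRb' hGBad
        have hstep2 := prRating_union (hp0 n) (hp1 n) hRb'
          (Finset.univ : Finset (Fin (m n) × Fin d × Bool)) Bad
        have hstep3 : ∑ x ∈ (Finset.univ : Finset (Fin (m n) × Fin d × Bool)),
            prRating (p n) Rn (Bad x)
            ≤ (Finset.univ : Finset (Fin (m n) × Fin d × Bool)).card
              • Real.exp (-(1 + ε / 2) * Real.log (m n)) :=
          Finset.sum_le_card_nsmul _ _ _ (fun x _ => hxbound x)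
        have hcard2 : ((Finset.univ : Finset (Fin (m n) × Fin d × Bool)).card : ℝ)
            = (m n : ℝ) * ((d : ℝ) * 2) := by
          simp [Finset.card_univ]
        have hm0 : (0 : ℝ) < (m n : ℝ) := lt_of_lt_of_le one_pos h5
        have hrw : (m n : ℝ) * Real.exp (-(1 + ε / 2) * Real.log (m n))
            = (m n : ℝ) ^ (-(ε / 2) : ℝ) := by
          rw [Real.rpow_def_of_pos hm0]
          nth_rewrite 1 [← Real.exp_log hm0]
          rw [← Real.exp_add]
          congr 1
          ring
        have hfinal : ((Finset.univ : Finset (Fin (m n) × Fin d × Bool)).card : ℝ)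
            * Real.exp (-(1 + ε / 2) * Real.log (m n))
            = 2 * (d : ℝ) * (m n : ℝ) ^ (-(ε / 2)) := by
          rw [hcard2]
          rw [show (m n : ℝ) * ((d : ℝ) * 2) * Real.exp (-(1 + ε / 2) * Real.log (m n))
            = 2 * (d : ℝ) * ((m n : ℝ) * Real.exp (-(1 + ε / 2) * Real.log (m n))) by ring]
          rw [hrw]
        rw [nsmul_eq_mul] at hstep3
        rw [hfinal] at hstep3
        linarith
      have hcompl := prRating_add_compl (hp0 n) (hp1 n) hRb' G
      linarith
    have hpart1 : Tendsto (fun n =>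
        prRating (p n) (fun i j => lvl (if σ n i then u n j else v n j))
          (fun Nm => ∀ j, phat n (uhat n Nm j) = phat n (u n j) ∧
            phat n (vhat n Nm j) = phat n (v n j)))
        atTop (nhds 1) := by
      have hup : ∀ᶠ n in atTop,
          prRating (p n) (fun i j => lvl (if σ n i then u n j else v n j))
            (fun Nm => ∀ j, phat n (uhat n Nm j) = phat n (u n j) ∧
              phat n (vhat n Nm j) = phat n (v n j)) ≤ 1 :=
        Eventually.of_forall fun n => prRating_le_one (hp0 n) (hp1 n) (hRb n) _
      have hlow : Tendsto (fun n => 1 - 2 * (d : ℝ) * (m n : ℝ) ^ (-(ε / 2))) atTop (nhds 1) := by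
        have h1 := (tendsto_const_nhds (x := (1 : ℝ)) (f := atTop (α := ℕ))).sub herr
        simpa using h1
      exact tendsto_of_tendsto_of_tendsto_of_le_of_le' hlow tendsto_const_nhds keybound hup
    refine ⟨hpart1, ?_⟩
    intro δ hδ
    have hup : ∀ᶠ n in atTop,
        prRating (p n) (fun i j => lvl (if σ n i then u n j else v n j))
          (fun Nm => ∀ j, |phat n (uhat n Nm j) - lvl (u n j)| ≤ δ ∧
            |phat n (vhat n Nm j) - lvl (v n j)| ≤ δ) ≤ 1 :=
      Eventually.of_forall fun n => prRating_le_one (hp0 n) (hp1 n) (hRb n) _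
    have hlow : ∀ᶠ n in atTop,
        prRating (p n) (fun i j => lvl (if σ n i then u n j else v n j))
          (fun Nm => ∀ j, phat n (uhat n Nm j) = phat n (u n j) ∧
            phat n (vhat n Nm j) = phat n (v n j)) ≤
        prRating (p n) (fun i j => lvl (if σ n i then u n j else v n j))
          (fun Nm => ∀ j, |phat n (uhat n Nm j) - lvl (u n j)| ≤ δ ∧
            |phat n (vhat n Nm j) - lvl (v n j)| ≤ δ) := by
      filter_upwards [habs δ hδ] with n hn
      apply prRating_mono (hp0 n) (hp1 n) (hRb n)
      intro Nm hNm j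
      obtain ⟨hu1, hv1⟩ := hNm j
      exact ⟨by rw [hu1]; exact hn _, by rw [hv1]; exact hn _⟩
    exact tendsto_of_tendsto_of_tendsto_of_le_of_le' hpart1 tendsto_const_nhds hlow hup
  · -- d = 1
    have hd1 : d = 1 := by omega
    subst hd1
    have hsub : ∀ k k' : Fin 1, k = k' := fun k k' => Subsingleton.elim k k'
    have hpart1 : Tendsto (fun n =>
        prRating (p n) (fun i j => lvl (if σ n i then u n j else v n j))
          (fun Nm => ∀ j, phat n (uhat n Nm j) = phat n (u n j) ∧
            phat n (vhat n Nm j) = phat n (v n j)))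
        atTop (nhds 1) := by
      have hone : ∀ n, prRating (p n) (fun i j => lvl (if σ n i then u n j else v n j))
          (fun Nm => ∀ j, phat n (uhat n Nm j) = phat n (u n j) ∧
            phat n (vhat n Nm j) = phat n (v n j)) = 1 := fun n =>
        prRating_eq_one (hp0 n) (hp1 n) (hRb n) (fun Nm j =>
          ⟨by rw [hsub (uhat n Nm j) (u n j)], by rw [hsub (vhat n Nm j) (v n j)]⟩)
      exact tendsto_const_nhds.congr fun n => (hone n).symm
    refine ⟨hpart1, ?_⟩
    intro δ hδ
    apply tendsto_const_nhds.congr'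
    filter_upwards [habs δ hδ] with n hn
    exact (prRating_eq_one (hp0 n) (hp1 n) (hRb n) (fun Nm j =>
      ⟨by rw [hsub (uhat n Nm j) (u n j)]; exact hn _,
       by rw [hsub (vhat n Nm j) (v n j)]; exact hn _⟩)).symm
end
end
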